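/- Let m ≥ 3 be an integer and n a positive integer. The number of quadruples (ℓ₁,ℓ₂,ℓ₃,ℓ₄) ∈ ℤ⁴ with p_m(ℓ₁) + 2·p_m(ℓ₂) + 4·p_m(ℓ₃) + 8·p_m(ℓ₄) = n equals the number of quadruples (x₁,x₂,x₃,x₄) ∈ ℤ⁴ with x₁² + 2x₂² + 4x₃² + 8x₄² = 8(m-2)n + 15(m-4)² and xⱼ ≡ m (mod 2(m-2)) for all j. -/

import Mathlib

/-!
Completing the square: with `x = 2(m-2)ℓ - (m-4)` one has `x² = 8(m-2)·p_m(ℓ) + (m-4)²`, and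
`ℓ ↦ x` is a bijection from `ℤ` onto the residue class of `m` modulo `2(m-2)`. Applied to each
coordinate it carries the weighted polygonal equation to the weighted square equation, the
constant `15(m-4)²` coming from `1 + 2 + 4 + 8 = 15`.
-/

/-- The generalized `m`-gonal number `p_m(ℓ) = ((m-2)ℓ² - (m-4)ℓ)/2`. -/
def polygonal (m ℓ : ℤ) : ℤ := ((m - 2) * ℓ ^ 2 - (m - 4) * ℓ) / 2

def polygonalShift (m ℓ : ℤ) : ℤ := 2 * (m - 2) * ℓ - (m - 4)

def polygonalShift₄ (m : ℤ) : ℤ × ℤ × ℤ × ℤ → ℤ × ℤ × ℤ × ℤ :=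
  Prod.map (polygonalShift m) (Prod.map (polygonalShift m) (Prod.map (polygonalShift m)
    (polygonalShift m)))

section

variable (m : ℤ)

theorem two_mul_polygonal (ℓ : ℤ) : 2 * polygonal m ℓ = (m - 2) * ℓ ^ 2 - (m - 4) * ℓ := by
  apply Int.mul_ediv_cancel'
  -- `(m-2)ℓ² - (m-4)ℓ = (m-2)(ℓ-1)ℓ + 2ℓ` and `(ℓ-1)ℓ` is even
  obtain ⟨k, hk⟩ := Int.even_mul_succ_self (ℓ - 1)
  exact ⟨(m - 2) * k + ℓ, by linear_combination (m - 2) * hk⟩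

theorem polygonalShift_sq (ℓ : ℤ) :
    polygonalShift m ℓ ^ 2 = 8 * (m - 2) * polygonal m ℓ + (m - 4) ^ 2 := by
  unfold polygonalShift
  linear_combination (-4 * (m - 2)) * two_mul_polygonal m ℓ

theorem polygonalShift_modEq (ℓ : ℤ) : polygonalShift m ℓ ≡ m [ZMOD 2 * (m - 2)] :=
  Int.modEq_iff_dvd.mpr ⟨1 - ℓ, by unfold polygonalShift; ring⟩

theorem exists_polygonalShift_eq_of_modEq {x : ℤ} (hx : x ≡ m [ZMOD 2 * (m - 2)]) :
    ∃ ℓ, polygonalShift m ℓ = x := by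
  obtain ⟨k, hk⟩ := Int.modEq_iff_dvd.mp hx
  exact ⟨1 - k, by unfold polygonalShift; linear_combination hk⟩

theorem polygonalShift_injective (hm : m ≠ 2) : Function.Injective (polygonalShift m) := by
  intro a b h
  have h2 : 2 * (m - 2) ≠ 0 := by omega
  exact mul_left_cancel₀ h2 (by unfold polygonalShift at h; linarith)

theorem polygonalShift₄_injective (hm : m ≠ 2) : Function.Injective (polygonalShift₄ m) :=
  have h := polygonalShift_injective m hm
  h.prodMap (h.prodMap (h.prodMap h))

theorem weighted_sq_polygonalShift (a b c d : ℤ) :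
    polygonalShift m a ^ 2 + 2 * polygonalShift m b ^ 2 + 4 * polygonalShift m c ^ 2
        + 8 * polygonalShift m d ^ 2
      = 8 * (m - 2) * (polygonal m a + 2 * polygonal m b + 4 * polygonal m c
          + 8 * polygonal m d) + 15 * (m - 4) ^ 2 := by
  simp only [polygonalShift_sq]
  ring

theorem image_polygonalShift₄ (hm : m ≠ 2) (n : ℤ) :
    polygonalShift₄ m '' {l : ℤ × ℤ × ℤ × ℤ |
        polygonal m l.1 + 2 * polygonal m l.2.1 + 4 * polygonal m l.2.2.1
          + 8 * polygonal m l.2.2.2 = n}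
      = {x : ℤ × ℤ × ℤ × ℤ |
        x.1 ^ 2 + 2 * x.2.1 ^ 2 + 4 * x.2.2.1 ^ 2 + 8 * x.2.2.2 ^ 2
            = 8 * (m - 2) * n + 15 * (m - 4) ^ 2 ∧
          x.1 ≡ m [ZMOD (2 * (m - 2))] ∧ x.2.1 ≡ m [ZMOD (2 * (m - 2))] ∧
          x.2.2.1 ≡ m [ZMOD (2 * (m - 2))] ∧ x.2.2.2 ≡ m [ZMOD (2 * (m - 2))]} := by
  ext ⟨x₁, x₂, x₃, x₄⟩
  constructor
  · rintro ⟨⟨a, b, c, d⟩, hl, h⟩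
    simp only [polygonalShift₄, Prod.map_apply, Prod.mk.injEq] at h
    obtain ⟨rfl, rfl, rfl, rfl⟩ := h
    refine ⟨?_, polygonalShift_modEq m a, polygonalShift_modEq m b, polygonalShift_modEq m c,
      polygonalShift_modEq m d⟩
    rw [weighted_sq_polygonalShift, ← hl]
  · rintro ⟨hx, h₁, h₂, h₃, h₄⟩
    obtain ⟨a, rfl⟩ := exists_polygonalShift_eq_of_modEq m h₁
    obtain ⟨b, rfl⟩ := exists_polygonalShift_eq_of_modEq m h₂
    obtain ⟨c, rfl⟩ := exists_polygonalShift_eq_of_modEq m h₃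
    obtain ⟨d, rfl⟩ := exists_polygonalShift_eq_of_modEq m h₄
    refine ⟨(a, b, c, d), ?_, rfl⟩
    rw [weighted_sq_polygonalShift] at hx
    have h8 : 8 * (m - 2) ≠ 0 := by omega
    exact mul_left_cancel₀ h8 (by linarith)

end

theorem card_polygonal_rep_eq_card_square_rep_general (m : ℤ) (hm : 3 ≤ m) (n : ℤ) :
    Set.ncard {l : ℤ × ℤ × ℤ × ℤ |
        polygonal m l.1 + 2 * polygonal m l.2.1 + 4 * polygonal m l.2.2.1
          + 8 * polygonal m l.2.2.2 = n}
      = Set.ncard {x : ℤ × ℤ × ℤ × ℤ |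
        x.1 ^ 2 + 2 * x.2.1 ^ 2 + 4 * x.2.2.1 ^ 2 + 8 * x.2.2.2 ^ 2
            = 8 * (m - 2) * n + 15 * (m - 4) ^ 2 ∧
          x.1 ≡ m [ZMOD (2 * (m - 2))] ∧ x.2.1 ≡ m [ZMOD (2 * (m - 2))] ∧
          x.2.2.1 ≡ m [ZMOD (2 * (m - 2))] ∧ x.2.2.2 ≡ m [ZMOD (2 * (m - 2))]} := by
  have hm2 : m ≠ 2 := by omega
  rw [← image_polygonalShift₄ m hm2 n,
    Set.ncard_image_of_injective _ (polygonalShift₄_injective m hm2)]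

theorem card_polygonal_rep_eq_card_square_rep (m : ℤ) (hm : 3 ≤ m) (n : ℤ) (hn : 0 < n) :
    Set.ncard {l : ℤ × ℤ × ℤ × ℤ |
        polygonal m l.1 + 2 * polygonal m l.2.1 + 4 * polygonal m l.2.2.1
          + 8 * polygonal m l.2.2.2 = n}
      = Set.ncard {x : ℤ × ℤ × ℤ × ℤ |
        x.1 ^ 2 + 2 * x.2.1 ^ 2 + 4 * x.2.2.1 ^ 2 + 8 * x.2.2.2 ^ 2
            = 8 * (m - 2) * n + 15 * (m - 4) ^ 2 ∧
          x.1 ≡ m [ZMOD (2 * (m - 2))] ∧ x.2.1 ≡ m [ZMOD (2 * (m - 2))] ∧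
          x.2.2.1 ≡ m [ZMOD (2 * (m - 2))] ∧ x.2.2.2 ≡ m [ZMOD (2 * (m - 2))]} :=
  card_polygonal_rep_eq_card_square_rep_general m hm n
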